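/- Data processing inequality for the optimal type-II error of hypothesis testing: Let P and Q be pmfs on a countable set 𝒱, let 𝒱′ be a countable set, and let W be a channel from 𝒱 to 𝒱′, i.e., W(·|v) is a pmf on 𝒱′ for each v ∈ 𝒱. Define (P∘W)(v′) = Σ_v P(v)·W(v′|v) and similarly Q∘W. Then for every ε ∈ [0,1): β_ε(P, Q) ≤ β_ε(P∘W, Q∘W). -/
import Mathlib


open scoped BigOperators

noncomputable section

attribute [local instance] Classical.propDecidable

/-- Probability of a set under a pmf. -/
def probOf {α : Type*} (P : α → ℝ) (S : Set α) : ℝ := ∑' a : S, P a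

/-- `P` is a probability mass function. -/
def IsPMF {α : Type*} (P : α → ℝ) : Prop := (∀ a, 0 ≤ P a) ∧ ∑' a, P a = 1

/-- Variational distance between two pmfs. -/
def tvDist {α : Type*} (P Q : α → ℝ) : ℝ := (1 / 2) * ∑' a, |P a - Q a|

/-- Optimal type-II error `β_ε(P,Q)` in binary hypothesis testing. -/
def beta {V : Type*} (ε : ℝ) (P Q : V → ℝ) : ℝ :=
  sInf {b : ℝ | ∃ T : V → ℝ, (∀ v, 0 ≤ T v ∧ T v ≤ 1) ∧
    1 - ε ≤ ∑' v, P v * T v ∧ b = ∑' v, Q v * T v}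

lemma IsPMF.summable {α : Type*} {P : α → ℝ} (h : IsPMF P) : Summable P := by
  by_contra hs
  have h2 := h.2
  rw [tsum_eq_zero_of_not_summable hs] at h2
  exact one_ne_zero h2.symm

lemma swap_sum {V V' : Type*}
    (P : V → ℝ) (hP : IsPMF P) (W : V → V' → ℝ) (hW : ∀ v, IsPMF (W v))
    (T' : V' → ℝ) (hT' : ∀ v', 0 ≤ T' v' ∧ T' v' ≤ 1) :
    ∑' v, P v * (∑' v', W v v' * T' v') = ∑' v', (∑' v, P v * W v v') * T' v' := by
  have hPs := hP.summable
  have hWs : ∀ v, Summable (W v) := fun v => (hW v).summable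
  have hnn : ∀ v v', 0 ≤ P v * (W v v' * T' v') := fun v v' =>
    mul_nonneg (hP.1 v) (mul_nonneg ((hW v).1 v') (hT' v').1)
  have hrow : ∀ v, Summable fun v' => P v * (W v v' * T' v') := by
    intro v
    refine Summable.of_nonneg_of_le (fun v' => hnn v v') (fun v' => ?_)
      (((hWs v).mul_left (P v)))
    exact mul_le_mul_of_nonneg_left
      (mul_le_of_le_one_right ((hW v).1 v') (hT' v').2) (hP.1 v)
  have hcol : ∀ v', Summable fun v => P v * (W v v' * T' v') := by
    intro v'
    refine Summable.of_nonneg_of_le (fun v => hnn v v') (fun v => ?_) hPs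
    calc P v * (W v v' * T' v') ≤ P v * 1 := mul_le_mul_of_nonneg_left
          (mul_le_one₀ ((hW v).2 ▸ Summable.le_tsum (hWs v) v' (fun _ _ => (hW v).1 _))
            (hT' v').1 (hT' v').2) (hP.1 v)
      _ = P v := mul_one _
  have hrowsum : ∀ v, ∑' v', P v * (W v v' * T' v') ≤ P v := by
    intro v
    rw [tsum_mul_left]
    calc P v * ∑' v', W v v' * T' v' ≤ P v * ∑' v', W v v' := by
          refine mul_le_mul_of_nonneg_left (Summable.tsum_le_tsum (fun v' =>
            mul_le_of_le_one_right ((hW v).1 v') (hT' v').2) ?_ (hWs v)) (hP.1 v)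
          exact Summable.of_nonneg_of_le (fun v' => mul_nonneg ((hW v).1 v') (hT' v').1)
            (fun v' => mul_le_of_le_one_right ((hW v).1 v') (hT' v').2) (hWs v)
      _ = P v := by rw [(hW v).2, mul_one]
  have hf : Summable fun p : V × V' => P p.1 * (W p.1 p.2 * T' p.2) :=
    (summable_prod_of_nonneg (fun p => hnn p.1 p.2)).mpr
      ⟨hrow, Summable.of_nonneg_of_le (fun v => tsum_nonneg (fun v' => hnn v v'))
        hrowsum hPs⟩
  calc ∑' v, P v * (∑' v', W v v' * T' v')
      = ∑' (v) (v'), P v * (W v v' * T' v') := by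
        congr 1; ext v; exact (tsum_mul_left).symm
    _ = ∑' (v') (v), P v * (W v v' * T' v') := (Summable.tsum_comm' (f := fun v v' => P v * (W v v' * T' v')) hf hrow hcol).symm
    _ = ∑' v', (∑' v, P v * W v v') * T' v' := by
        congr 1; ext v'
        rw [← tsum_mul_right]
        congr 1; ext v; ring

/-- data processing inequality for the optimal type-II error of
binary hypothesis testing. -/
theorem beta_data_processing
    {V V' : Type*} [Countable V] [Countable V']
    (P Q : V → ℝ) (hP : IsPMF P) (hQ : IsPMF Q)
    (W : V → V' → ℝ) (hW : ∀ v, IsPMF (W v))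
    (ε : ℝ) (hε0 : 0 ≤ ε) (hε1 : ε < 1) :
    beta ε P Q ≤
      beta ε (fun v' => ∑' v : V, P v * W v v') (fun v' => ∑' v : V, Q v * W v v') := by
  have hone : ∀ v, (∑' v', W v v' * (1:ℝ)) = 1 := by
    intro v; simpa using (hW v).2
  have hone2 : ∀ v, (∑' v' : V', W v v') = 1 := fun v => (hW v).2
  refine le_csInf ⟨1, fun _ => 1, fun v' => ⟨zero_le_one, le_refl 1⟩, ?_, ?_⟩ ?_
  · rw [← swap_sum P hP W hW (fun _ => 1) (fun v' => ⟨zero_le_one, le_refl 1⟩)]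
    simp only [mul_one, hone2, hP.2]
    linarith
  · rw [← swap_sum Q hQ W hW (fun _ => 1) (fun v' => ⟨zero_le_one, le_refl 1⟩)]
    simp [hone2, hQ.2]
  · rintro b ⟨T', hT', hPb, hQb⟩
    have hmem : b ∈ {b : ℝ | ∃ T : V → ℝ, (∀ v, 0 ≤ T v ∧ T v ≤ 1) ∧
        1 - ε ≤ ∑' v, P v * T v ∧ b = ∑' v, Q v * T v} := by
      refine ⟨fun v => ∑' v', W v v' * T' v', fun v => ⟨?_, ?_⟩, ?_, ?_⟩
      · exact tsum_nonneg fun v' => mul_nonneg ((hW v).1 v') (hT' v').1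
      · calc ∑' v', W v v' * T' v' ≤ ∑' v', W v v' := by
              refine Summable.tsum_le_tsum (fun v' =>
                mul_le_of_le_one_right ((hW v).1 v') (hT' v').2) ?_ (hW v).summable
              exact Summable.of_nonneg_of_le
                (fun v' => mul_nonneg ((hW v).1 v') (hT' v').1)
                (fun v' => mul_le_of_le_one_right ((hW v).1 v') (hT' v').2)
                (hW v).summable
          _ = 1 := (hW v).2
      · rw [swap_sum P hP W hW T' hT']; exact hPb
      · rw [swap_sum Q hQ W hW T' hT']; exact hQb
    refine csInf_le ⟨0, ?_⟩ hmem
    rintro x ⟨T, hT, -, rfl⟩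
    exact tsum_nonneg fun v => mul_nonneg (hQ.1 v) (hT v).1
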